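/- arXiv:2106.08142 — 2 statements merged into one kernel-verified Lean document; each statement's English description precedes it below -/
import Mathlib

section
/- In a cartesian bicategory, the Frobenius law implies the snake equations: writing cup = ¡ ; Δ : I → X⊗X and cap = ∇ ; ! : X⊗X → I, one has (cup ⊗ id_X) ; (id_X ⊗ cap) = id_X and (id_X ⊗ cup) ; (cap ⊗ id_X) = id_X; hence every object of a cartesian bicategory is self-dual. -/
open CategoryTheory MonoidalCategory

universe v u

/-- A cartesian bicategory: a poset-enriched symmetric monoidal category in which
every object carries a cocommutative comonoid (copy/discard) whose structure maps
have right adjoints (cocopy/codiscard), the Frobenius law holds, every morphism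
is a lax comonoid homomorphism, and the comonoids are coherent with the monoidal
structure. -/
class CartesianBicat (B : Type u) [Category.{v} B] [MonoidalCategory B]
    [SymmetricCategory B] [∀ X Y : B, PartialOrder (X ⟶ Y)] where
  comp_le_comp : ∀ {X Y Z : B} {f f' : X ⟶ Y} {g g' : Y ⟶ Z},
    f ≤ f' → g ≤ g' → f ≫ g ≤ f' ≫ g'
  tensorHom_le_tensorHom : ∀ {X Y X' Y' : B} {f f' : X ⟶ Y} {g g' : X' ⟶ Y'},
    f ≤ f' → g ≤ g' → (f ⊗ₘ g) ≤ (f' ⊗ₘ g')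
  copy : ∀ X : B, X ⟶ X ⊗ X
  discard : ∀ X : B, X ⟶ 𝟙_ B
  cocopy : ∀ X : B, X ⊗ X ⟶ X
  codiscard : ∀ X : B, 𝟙_ B ⟶ X
  -- cocommutative comonoid axioms
  copy_assoc : ∀ X : B,
    copy X ≫ (copy X ▷ X) ≫ (α_ X X X).hom = copy X ≫ (X ◁ copy X)
  copy_comm : ∀ X : B, copy X ≫ (β_ X X).hom = copy X
  copy_counit : ∀ X : B, copy X ≫ (discard X ▷ X) ≫ (λ_ X).hom = 𝟙 X
  -- cocopy and codiscard are right adjoint to copy and discard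
  copy_cocopy_unit : ∀ X : B, 𝟙 X ≤ copy X ≫ cocopy X
  cocopy_copy_counit : ∀ X : B, cocopy X ≫ copy X ≤ 𝟙 (X ⊗ X)
  discard_codiscard_unit : ∀ X : B, 𝟙 X ≤ discard X ≫ codiscard X
  codiscard_discard_counit : ∀ X : B, codiscard X ≫ discard X ≤ 𝟙 (𝟙_ B)
  -- the Frobenius law
  frobenius : ∀ X : B,
    cocopy X ≫ copy X = (X ◁ copy X) ≫ (α_ X X X).inv ≫ (cocopy X ▷ X)
  frobenius' : ∀ X : B,
    cocopy X ≫ copy X = (copy X ▷ X) ≫ (α_ X X X).hom ≫ (X ◁ cocopy X)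
  -- every morphism is a lax comonoid homomorphism
  lax_copy : ∀ {X Y : B} (R : X ⟶ Y), R ≫ copy Y ≤ copy X ≫ (R ⊗ₘ R)
  lax_discard : ∀ {X Y : B} (R : X ⟶ Y), R ≫ discard Y ≤ discard X
  -- coherence of the comonoids with the monoidal structure
  discard_unit : discard (𝟙_ B) = 𝟙 (𝟙_ B)
  copy_unit : copy (𝟙_ B) = (λ_ (𝟙_ B)).inv
  discard_tensor : ∀ X Y : B,
    discard (X ⊗ Y) = (discard X ⊗ₘ discard Y) ≫ (λ_ (𝟙_ B)).hom
  copy_tensor : ∀ X Y : B,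
    copy (X ⊗ Y) = (copy X ⊗ₘ copy Y) ≫ tensorμ X X Y Y

namespace CartesianBicat

variable {B : Type u} [Category.{v} B] [MonoidalCategory B] [SymmetricCategory B]
  [∀ X Y : B, PartialOrder (X ⟶ Y)] [CartesianBicat B]

/-- A map in a cartesian bicategory: a strict comonoid homomorphism. -/
def IsMap {X Y : B} (f : X ⟶ Y) : Prop :=
  f ≫ copy Y = copy X ≫ (f ⊗ₘ f) ∧ f ≫ discard Y = discard X

/-- The first projection of the tensor on maps. -/
def proj₁ (X Y : B) : X ⊗ Y ⟶ X := (X ◁ discard Y) ≫ (ρ_ X).hom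

/-- The second projection of the tensor on maps. -/
def proj₂ (X Y : B) : X ⊗ Y ⟶ Y := (discard X ▷ Y) ≫ (λ_ Y).hom

/-- The cup of the self-duality of an object. -/
def cup (X : B) : 𝟙_ B ⟶ X ⊗ X := codiscard X ≫ copy X

/-- The cap of the self-duality of an object. -/
def cap (X : B) : X ⊗ X ⟶ 𝟙_ B := cocopy X ≫ discard X

/-- The top element of a hom-poset. -/
def homTop (X Y : B) : X ⟶ Y := discard X ≫ codiscard Y

/-- The meet of two morphisms of a hom-poset. -/
def homMeet {X Y : B} (R S : X ⟶ Y) : X ⟶ Y :=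
  copy X ≫ (R ⊗ₘ S) ≫ cocopy Y

end CartesianBicat

open CartesianBicat

/-!
Since copy ⊣ cocopy and discard ⊣ codiscard, and right adjoints in a locally posetal
bicategory are unique, the counit laws of the comonoid (copy, discard) transpose to the
unit laws of (cocopy, codiscard). Each snake then collapses: the Frobenius law turns
`(codiscard ▷ X) ≫ (copy ▷ X) ≫ α ≫ (X ◁ cocopy) ≫ (X ◁ discard)` into
`(codiscard ▷ X) ≫ cocopy ≫ copy ≫ (X ◁ discard)`, which is a unit law followed by a
counit law.
-/

namespace CartesianBicat

variable {B : Type u} [Category.{v} B] [∀ X Y : B, PartialOrder (X ⟶ Y)]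

def Adjoint {X Y : B} (f : X ⟶ Y) (g : Y ⟶ X) : Prop :=
  𝟙 X ≤ f ≫ g ∧ g ≫ f ≤ 𝟙 Y

theorem Adjoint.ofIso {X Y : B} (e : X ≅ Y) : Adjoint e.hom e.inv :=
  ⟨e.hom_inv_id.ge, e.inv_hom_id.le⟩

variable [MonoidalCategory B] [SymmetricCategory B] [CartesianBicat B]

theorem whiskerRight_le {X Y : B} {f g : X ⟶ Y} (h : f ≤ g) (Z : B) : f ▷ Z ≤ g ▷ Z := by
  simpa only [tensorHom_id] using tensorHom_le_tensorHom h (le_refl (𝟙 Z))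

theorem whiskerLeft_le (Z : B) {X Y : B} {f g : X ⟶ Y} (h : f ≤ g) : Z ◁ f ≤ Z ◁ g := by
  simpa only [id_tensorHom] using tensorHom_le_tensorHom (le_refl (𝟙 Z)) h

namespace Adjoint

theorem right_le {X Y : B} {f : X ⟶ Y} {g g' : Y ⟶ X} (h : Adjoint f g)
    (h' : Adjoint f g') : g ≤ g' :=
  calc g = g ≫ 𝟙 X := (Category.comp_id g).symm
    _ ≤ g ≫ f ≫ g' := comp_le_comp le_rfl h'.1
    _ = (g ≫ f) ≫ g' := (Category.assoc g f g').symm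
    _ ≤ 𝟙 Y ≫ g' := comp_le_comp h.2 le_rfl
    _ = g' := Category.id_comp g'

theorem right_unique {X Y : B} {f : X ⟶ Y} {g g' : Y ⟶ X} (h : Adjoint f g)
    (h' : Adjoint f g') : g = g' :=
  le_antisymm (h.right_le h') (h'.right_le h)

theorem comp {X Y Z : B} {f : X ⟶ Y} {g : Y ⟶ X} {f' : Y ⟶ Z} {g' : Z ⟶ Y}
    (h : Adjoint f g) (h' : Adjoint f' g') : Adjoint (f ≫ f') (g' ≫ g) := by
  constructor
  · calc 𝟙 X ≤ f ≫ g := h.1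
      _ = f ≫ 𝟙 Y ≫ g := by simp
      _ ≤ f ≫ (f' ≫ g') ≫ g := comp_le_comp le_rfl (comp_le_comp h'.1 le_rfl)
      _ = (f ≫ f') ≫ g' ≫ g := by simp
  · calc (g' ≫ g) ≫ f ≫ f' = g' ≫ (g ≫ f) ≫ f' := by simp
      _ ≤ g' ≫ 𝟙 Y ≫ f' := comp_le_comp le_rfl (comp_le_comp h.2 le_rfl)
      _ = g' ≫ f' := by simp
      _ ≤ 𝟙 Z := h'.2

theorem whiskerRight {X Y : B} {f : X ⟶ Y} {g : Y ⟶ X} (h : Adjoint f g) (Z : B) :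
    Adjoint (f ▷ Z) (g ▷ Z) :=
  ⟨by simpa only [comp_whiskerRight, id_whiskerRight] using whiskerRight_le h.1 Z,
    by simpa only [comp_whiskerRight, id_whiskerRight] using whiskerRight_le h.2 Z⟩

theorem whiskerLeft (Z : B) {X Y : B} {f : X ⟶ Y} {g : Y ⟶ X} (h : Adjoint f g) :
    Adjoint (Z ◁ f) (Z ◁ g) :=
  ⟨by simpa only [whiskerLeft_comp, whiskerLeft_id] using whiskerLeft_le Z h.1,
    by simpa only [whiskerLeft_comp, whiskerLeft_id] using whiskerLeft_le Z h.2⟩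

end Adjoint

theorem adjoint_copy_cocopy (X : B) : Adjoint (copy X) (cocopy X) :=
  ⟨copy_cocopy_unit X, cocopy_copy_counit X⟩

theorem adjoint_discard_codiscard (X : B) : Adjoint (discard X) (codiscard X) :=
  ⟨discard_codiscard_unit X, codiscard_discard_counit X⟩

theorem copy_counit_left (X : B) : copy X ≫ discard X ▷ X = (λ_ X).inv := by
  rw [← Iso.comp_hom_eq_id, Category.assoc, copy_counit]

theorem copy_counit_right (X : B) : copy X ≫ X ◁ discard X = (ρ_ X).inv :=
  calc copy X ≫ X ◁ discard X = copy X ≫ (β_ X X).hom ≫ X ◁ discard X := by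
        rw [← Category.assoc, copy_comm]
    _ = (copy X ≫ discard X ▷ X) ≫ (β_ (𝟙_ B) X).hom := by
        rw [← BraidedCategory.braiding_naturality_left, Category.assoc]
    _ = (ρ_ X).inv := by rw [copy_counit_left, leftUnitor_inv_braiding]

theorem cocopy_unit_left (X : B) : codiscard X ▷ X ≫ cocopy X = (λ_ X).hom :=
  ((adjoint_copy_cocopy X).comp ((adjoint_discard_codiscard X).whiskerRight X)).right_unique
    (by rw [copy_counit_left]; exact Adjoint.ofIso (λ_ X).symm)

theorem cocopy_unit_right (X : B) : X ◁ codiscard X ≫ cocopy X = (ρ_ X).hom :=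
  ((adjoint_copy_cocopy X).comp ((adjoint_discard_codiscard X).whiskerLeft X)).right_unique
    (by rw [copy_counit_right]; exact Adjoint.ofIso (ρ_ X).symm)

theorem cup_whiskerRight_comp_whiskerLeft_cap (X : B) :
    cup X ▷ X ≫ (α_ X X X).hom ≫ X ◁ cap X = (λ_ X).hom ≫ (ρ_ X).inv :=
  calc cup X ▷ X ≫ (α_ X X X).hom ≫ X ◁ cap X
      = codiscard X ▷ X ≫ (copy X ▷ X ≫ (α_ X X X).hom ≫ X ◁ cocopy X) ≫ X ◁ discard X := by
        simp only [cup, cap, comp_whiskerRight, whiskerLeft_comp, Category.assoc]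
    _ = (codiscard X ▷ X ≫ cocopy X) ≫ copy X ≫ X ◁ discard X := by
        rw [← frobenius', Category.assoc, Category.assoc]
    _ = (λ_ X).hom ≫ (ρ_ X).inv := by rw [cocopy_unit_left, copy_counit_right]

theorem whiskerLeft_cup_comp_cap_whiskerRight (X : B) :
    X ◁ cup X ≫ (α_ X X X).inv ≫ cap X ▷ X = (ρ_ X).hom ≫ (λ_ X).inv :=
  calc X ◁ cup X ≫ (α_ X X X).inv ≫ cap X ▷ X
      = X ◁ codiscard X ≫ (X ◁ copy X ≫ (α_ X X X).inv ≫ cocopy X ▷ X) ≫ discard X ▷ X := by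
        simp only [cup, cap, comp_whiskerRight, whiskerLeft_comp, Category.assoc]
    _ = (X ◁ codiscard X ≫ cocopy X) ≫ copy X ≫ discard X ▷ X := by
        rw [← frobenius, Category.assoc, Category.assoc]
    _ = (ρ_ X).hom ≫ (λ_ X).inv := by rw [cocopy_unit_right, copy_counit_left]

end CartesianBicat

/-- In a cartesian bicategory, the Frobenius law implies the snake equations for
`cup = ¡ ≫ Δ` and `cap = ∇ ≫ !`; hence every object is self-dual. -/
theorem snake_equations {B : Type u} [Category.{v} B]
    [MonoidalCategory B] [SymmetricCategory B] [∀ X Y : B, PartialOrder (X ⟶ Y)]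
    [CartesianBicat B] (X : B) :
    (λ_ X).inv ≫ (cup X ▷ X) ≫ (α_ X X X).hom ≫ (X ◁ cap X) ≫ (ρ_ X).hom = 𝟙 X ∧
    (ρ_ X).inv ≫ (X ◁ cup X) ≫ (α_ X X X).inv ≫ (cap X ▷ X) ≫ (λ_ X).hom = 𝟙 X :=
  ⟨by simp [reassoc_of% cup_whiskerRight_comp_whiskerLeft_cap X],
    by simp [reassoc_of% whiskerLeft_cup_comp_cap_whiskerRight X]⟩
end

section
/- Let P : C^op → InfSL be an elementary existential doctrine, R ∈ P(X×Y) a map in Bicat_P, and h : X → Y a morphism of C. Then ⊤_{P(X)} ≤ P_{⟨id_X, h⟩}(R) if and only if R = P_{h × id_Y}(δ_Y). Consequently, P satisfies the Rule of Unique Choice (every map in Bicat_P admits such an h) if and only if the graph functor Γ_P : C → Map(Bicat_P) is full. -/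
open CategoryTheory CategoryTheory.Limits

universe v u w

/-- An elementary existential doctrine on a cartesian category `C`:
a contravariant functor into inf-semilattices with top, equipped with equality
predicates `δ`, and left adjoints to reindexing along both product projections,
satisfying Beck–Chevalley, Frobenius reciprocity and the elementarity condition. -/
structure EED (C : Type u) [Category.{v} C] [HasFiniteProducts C] where
  obj : C → Type w
  semi : ∀ A : C, SemilatticeInf (obj A)
  otop : ∀ A : C, OrderTop (obj A)
  map : ∀ {A B : C}, (A ⟶ B) → obj B → obj A
  map_id : ∀ (A : C) (α : obj A), map (𝟙 A) α = α
  map_comp : ∀ {A B D : C} (f : A ⟶ B) (g : B ⟶ D) (α : obj D),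
    map (f ≫ g) α = map f (map g α)
  map_inf : ∀ {A B : C} (f : A ⟶ B) (α β : obj B), map f (α ⊓ β) = map f α ⊓ map f β
  map_top : ∀ {A B : C} (f : A ⟶ B), map f (⊤ : obj B) = (⊤ : obj A)
  /-- the equality predicate -/
  δ : ∀ A : C, obj (A ⨯ A)
  /-- existential quantification along the first projection (quantifying away the
  second factor) -/
  exFst : ∀ {X A : C}, obj (X ⨯ A) → obj X
  exFst_adj : ∀ {X A : C} (β : obj (X ⨯ A)) (α : obj X),
    exFst β ≤ α ↔ β ≤ map prod.fst α
  /-- existential quantification along the second projection -/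
  exSnd : ∀ {X A : C}, obj (X ⨯ A) → obj A
  exSnd_adj : ∀ {X A : C} (β : obj (X ⨯ A)) (α : obj A),
    exSnd β ≤ α ↔ β ≤ map prod.snd α
  bcFst : ∀ {X X' A : C} (f : X' ⟶ X) (β : obj (X ⨯ A)),
    exFst (map (prod.map f (𝟙 A)) β) = map f (exFst β)
  bcSnd : ∀ {X A A' : C} (f : A' ⟶ A) (β : obj (X ⨯ A)),
    exSnd (map (prod.map (𝟙 X) f) β) = map f (exSnd β)
  frobFst : ∀ {X A : C} (α : obj X) (β : obj (X ⨯ A)),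
    exFst (map prod.fst α ⊓ β) = α ⊓ exFst β
  frobSnd : ∀ {X A : C} (α : obj A) (β : obj (X ⨯ A)),
    exSnd (map prod.snd α ⊓ β) = α ⊓ exSnd β
  /-- elementarity: `α ↦ P_{⟨π₁,π₂⟩}(α) ⊓ P_{⟨π₂,π₃⟩}(δ_A)` is left adjoint to
  reindexing along `id_X × Δ_A`. -/
  elem : ∀ {X A : C} (α : obj (X ⨯ A)) (γ : obj (X ⨯ (A ⨯ A))),
    (map (prod.map (𝟙 X) prod.fst) α ⊓ map prod.snd (δ A) ≤ γ) ↔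
      α ≤ map (prod.map (𝟙 X) (diag A)) γ

attribute [instance] EED.semi EED.otop

variable {C : Type u} [Category.{v} C] [HasFiniteProducts C]

namespace EED

/-- Composition in the bicategory of relations `Bicat_P`: realised using the
ambient object `(X ⨯ Z) ⨯ Y` and existential quantification of the middle factor. -/
noncomputable def rcomp (P : EED C) {X Y Z : C} (R : P.obj (X ⨯ Y)) (S : P.obj (Y ⨯ Z)) :
    P.obj (X ⨯ Z) :=
  P.exFst (P.map (prod.lift (prod.fst ≫ prod.fst) prod.snd) R ⊓
    P.map (prod.lift prod.snd (prod.fst ≫ prod.snd)) S)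

/-- The graph of a morphism of the base category. -/
noncomputable def graph (P : EED C) {X Y : C} (f : X ⟶ Y) : P.obj (X ⨯ Y) :=
  P.map (prod.map f (𝟙 Y)) (P.δ Y)

/-- Tensor product of relations in `Bicat_P`. -/
noncomputable def rtensor (P : EED C) {X Y X' Y' : C} (R : P.obj (X ⨯ Y)) (S : P.obj (X' ⨯ Y')) :
    P.obj ((X ⨯ X') ⨯ (Y ⨯ Y')) :=
  P.map (prod.map prod.fst prod.fst) R ⊓ P.map (prod.map prod.snd prod.snd) S

end EED

/-- A relation `R ∈ P(X ⨯ Y)` is a map of `Bicat_P` when it is total and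
single-valued in the internal sense. -/
def EED.IsMapRel (P : EED C) {X Y : C} (R : P.obj (X ⨯ Y)) : Prop :=
  P.exFst R = (⊤ : P.obj X) ∧
  P.map (prod.map (𝟙 X) prod.fst : X ⨯ (Y ⨯ Y) ⟶ X ⨯ Y) R ⊓
    P.map (prod.lift prod.fst (prod.snd ≫ prod.snd) : X ⨯ (Y ⨯ Y) ⟶ X ⨯ Y) R ≤
  P.map (prod.snd : X ⨯ (Y ⨯ Y) ⟶ Y ⨯ Y) (P.δ Y)

/-! Reindexing along `(x, y) ↦ (x, h x, y)` makes the hypothesis `⊤ ≤ P_{⟨id,h⟩}(R)` a true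
conjunct, and turns the Leibniz rule for `R` into `Γ(h) ≤ R` and single-valuedness of `R` into
`R ≤ Γ(h)`. Conversely, reflexivity of `δ` gives `⊤ ≤ P_{⟨id,h⟩}(Γ(h))`. Unique choice and fullness
of `Γ` are then equivalent relation by relation. -/

namespace EED

attribute [local simp] prod.lift_fst prod.lift_snd prod.lift_fst_assoc prod.lift_snd_assoc

variable (P : EED C)

def IsSingleValued {X Y : C} (R : P.obj (X ⨯ Y)) : Prop :=
  P.map (prod.map (𝟙 X) prod.fst : X ⨯ (Y ⨯ Y) ⟶ X ⨯ Y) R ⊓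
    P.map (prod.lift prod.fst (prod.snd ≫ prod.snd) : X ⨯ (Y ⨯ Y) ⟶ X ⨯ Y) R ≤
  P.map (prod.snd : X ⨯ (Y ⨯ Y) ⟶ Y ⨯ Y) (P.δ Y)

theorem IsMapRel.isSingleValued {P : EED C} {X Y : C} {R : P.obj (X ⨯ Y)} (hR : P.IsMapRel R) :
    P.IsSingleValued R :=
  hR.2

theorem map_monotone {A B : C} (f : A ⟶ B) : Monotone (P.map f) := fun _ _ h =>
  inf_eq_left.mp (by rw [← P.map_inf, inf_eq_left.mpr h])

theorem top_le_map {A B : C} (f : A ⟶ B) {β : P.obj B} (h : ⊤ ≤ β) : ⊤ ≤ P.map f β :=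
  P.map_top f ▸ P.map_monotone f h

theorem top_le_map_diag_δ (Y : C) : ⊤ ≤ P.map (diag Y) (P.δ Y) := by
  have h : ⊤ ≤ P.map (prod.map (𝟙 Y) (diag Y)) (P.map prod.snd (P.δ Y)) :=
    (P.elem ⊤ _).mp inf_le_right
  have h' := P.top_le_map (diag Y) h
  rwa [← P.map_comp, ← P.map_comp,
    show (diag Y ≫ prod.map (𝟙 Y) (diag Y)) ≫ prod.snd = diag Y by ext <;> simp] at h'

theorem map_fst_inf_δ_le_map_snd {X Y : C} (γ : P.obj (X ⨯ Y)) :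
    P.map (prod.map (𝟙 X) prod.fst) γ ⊓ P.map prod.snd (P.δ Y) ≤
      P.map (prod.map (𝟙 X) prod.snd) γ := by
  refine (P.elem γ _).mpr ?_
  rw [← P.map_comp, show prod.map (𝟙 X) (diag Y) ≫ prod.map (𝟙 X) prod.snd = 𝟙 _ by
    ext <;> simp, P.map_id]

theorem top_le_map_lift_graph {X Y : C} (h : X ⟶ Y) :
    ⊤ ≤ P.map (prod.lift (𝟙 X) h) (P.graph h) := by
  rw [graph, ← P.map_comp, show prod.lift (𝟙 X) h ≫ prod.map h (𝟙 Y) = h ≫ diag Y by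
    ext <;> simp, P.map_comp]
  exact P.top_le_map h (P.top_le_map_diag_δ Y)

section InsertValue

variable {X Y : C} (h : X ⟶ Y)

noncomputable def insertValue : X ⨯ Y ⟶ X ⨯ (Y ⨯ Y) :=
  prod.lift prod.fst (prod.lift (prod.fst ≫ h) prod.snd)

theorem insertValue_map_fst :
    insertValue h ≫ prod.map (𝟙 X) prod.fst = prod.fst ≫ prod.lift (𝟙 X) h := by
  ext <;> simp [insertValue]

theorem insertValue_map_snd : insertValue h ≫ prod.map (𝟙 X) prod.snd = 𝟙 _ := by
  ext <;> simp [insertValue]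

theorem insertValue_snd : insertValue h ≫ prod.snd = prod.map h (𝟙 Y) := by
  ext <;> simp [insertValue]

theorem insertValue_lift_fst_snd_snd :
    insertValue h ≫ prod.lift prod.fst (prod.snd ≫ prod.snd) = 𝟙 _ := by
  ext <;> simp [insertValue]

variable {P h}

theorem map_insertValue_map_fst_eq_top {γ : P.obj (X ⨯ Y)}
    (hγ : ⊤ ≤ P.map (prod.lift (𝟙 X) h) γ) :
    P.map (insertValue h) (P.map (prod.map (𝟙 X) prod.fst) γ) = ⊤ := by
  rw [← P.map_comp, insertValue_map_fst, P.map_comp, top_le_iff.mp hγ, P.map_top]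

theorem graph_le_of_top_le_map_lift {γ : P.obj (X ⨯ Y)}
    (hγ : ⊤ ≤ P.map (prod.lift (𝟙 X) h) γ) : P.graph h ≤ γ := by
  have leibniz := P.map_monotone (insertValue h) (P.map_fst_inf_δ_le_map_snd γ)
  rwa [P.map_inf, map_insertValue_map_fst_eq_top hγ, top_inf_eq, ← P.map_comp, ← P.map_comp,
    insertValue_snd, insertValue_map_snd, P.map_id] at leibniz

theorem le_graph_of_isSingleValued {R : P.obj (X ⨯ Y)} (hR : P.IsSingleValued R)
    (hRh : ⊤ ≤ P.map (prod.lift (𝟙 X) h) R) : R ≤ P.graph h := by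
  have single := P.map_monotone (insertValue h) hR
  rwa [P.map_inf, map_insertValue_map_fst_eq_top hRh, top_inf_eq, ← P.map_comp, ← P.map_comp,
    insertValue_lift_fst_snd_snd, insertValue_snd, P.map_id] at single

theorem top_le_map_lift_iff_eq_graph {R : P.obj (X ⨯ Y)} (hR : P.IsSingleValued R) :
    ⊤ ≤ P.map (prod.lift (𝟙 X) h) R ↔ R = P.graph h := by
  refine ⟨fun hRh => le_antisymm (le_graph_of_isSingleValued hR hRh)
    (graph_le_of_top_le_map_lift hRh), ?_⟩
  rintro rfl
  exact P.top_le_map_lift_graph h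

end InsertValue

end EED

/-- For a map `R` of `Bicat_P` and `h : X ⟶ Y` in `C`, `⊤ ≤ P_{⟨id,h⟩}(R)` iff
`R` is the graph of `h`.  Consequently, `P` satisfies the Rule of Unique Choice
iff the graph functor `Γ_P : C → Map(Bicat_P)` is full. -/
theorem ruc_iff_graph_full (P : EED C) :
    (∀ (X Y : C) (R : P.obj (X ⨯ Y)), P.IsMapRel R → ∀ h : X ⟶ Y,
      ((⊤ : P.obj X) ≤ P.map (prod.lift (𝟙 X) h) R ↔ R = P.graph h)) ∧
    ((∀ (X Y : C) (R : P.obj (X ⨯ Y)), P.IsMapRel R →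
        ∃ h : X ⟶ Y, (⊤ : P.obj X) ≤ P.map (prod.lift (𝟙 X) h) R) ↔
     (∀ (X Y : C) (R : P.obj (X ⨯ Y)), P.IsMapRel R →
        ∃ h : X ⟶ Y, R = P.graph h)) := by
  have key X Y (R : P.obj (X ⨯ Y)) (hR : P.IsMapRel R) (h : X ⟶ Y) :=
    EED.top_le_map_lift_iff_eq_graph (h := h) hR.isSingleValued
  refine ⟨key, forall₃_congr fun X Y R => forall_congr' fun hR => ?_⟩
  exact exists_congr fun h => key X Y R hR h
end
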